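/- Let μ = Σ_{λ∈Λ} p(λ) δ_λ, with p(λ) ∈ ℂ, be an almost periodic measure on ℝ^d with uniformly discrete support Λ. Then for any ε > 0 and any λ ∈ ℝ^d there is a relatively dense set T ⊂ ℝ^d such that |μ({λ'}) − μ({λ})| < ε for all λ' ∈ T (here μ({x}) denotes the mass of μ at the point x, equal to p(x) for x ∈ Λ and 0 otherwise). -/

import Mathlib

open Complex SchwartzMap Metric Set MeasureTheory
open scoped ContDiff ENNReal Pointwise Real

noncomputable section

/-- Euclidean space `ℝ^d`. -/
abbrev Ed (d : ℕ) : Type := EuclideanSpace ℝ (Fin d)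

/-- Temperate distributions: continuous linear functionals on the Schwartz space. -/
abbrev TempDist (d : ℕ) : Type := 𝓢(Ed d, ℂ) →L[ℂ] ℂ

namespace Paper

variable {d : ℕ}

/-- A set is locally finite if its intersection with every ball is finite. -/
def IsLocallyFinite (A : Set (Ed d)) : Prop :=
  ∀ (x : Ed d) (r : ℝ), (A ∩ Metric.ball x r).Finite

/-- The separating constant `η(A) = inf {|x - x'| : x, x' ∈ A, x ≠ x'}`
(as an extended real, so that `η(A) = ∞` when `A` has at most one point). -/
def eta (A : Set (Ed d)) : ℝ≥0∞ :=
  ⨅ (x : A) (y : A) (_ : (x : Ed d) ≠ (y : Ed d)), edist (x : Ed d) (y : Ed d)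

/-- A set is uniformly discrete if it is locally finite and `η(A) > 0`. -/
def IsUniformlyDiscrete (A : Set (Ed d)) : Prop :=
  IsLocallyFinite A ∧ 0 < eta A

/-- A locally finite set is of bounded density if `sup_x #(A ∩ B(x,1)) < ∞`. -/
def HasBoundedDensity (A : Set (Ed d)) : Prop :=
  ∃ C : ℕ, ∀ x : Ed d, (A ∩ Metric.ball x 1).Finite ∧ (A ∩ Metric.ball x 1).ncard ≤ C

/-- A full-rank lattice in `ℝ^d`: the image of `ℤ^d` under an invertible linear operator,
equivalently the integer span of a basis. -/
def IsFullRankLattice (L : Set (Ed d)) : Prop :=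
  ∃ b : Module.Basis (Fin d) ℝ (Ed d),
    L = Set.range (fun n : Fin d → ℤ => ∑ i : Fin d, (n i : ℝ) • b i)

/-- The support of a temperate distribution: `x` is in the support iff `f` does not
vanish near `x`, i.e. for every open `U ∋ x` there is a test function supported
in `U` on which `f` is nonzero. -/
def distSupport (f : TempDist d) : Set (Ed d) :=
  {x | ∀ U : Set (Ed d), IsOpen U → x ∈ U →
     ∃ φ : 𝓢(Ed d, ℂ), tsupport (⇑φ) ⊆ U ∧ f φ ≠ 0}

/-- The Fourier transform of a temperate distribution, `f̂(φ) = f(φ̂)`. -/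
def fourierT (f : TempDist d) : TempDist d :=
  f.comp (fourierTransformCLM ℂ)

/-- The spectrum of a temperate distribution: the support of its Fourier transform. -/
def spectrumOf (f : TempDist d) : Set (Ed d) := distSupport (fourierT f)

/-- The partial derivative `∂/∂x_i` of a function on `ℝ^d`. -/
def pderiv1 (i : Fin d) (φ : Ed d → ℂ) : Ed d → ℂ :=
  fun x => fderiv ℝ φ x (EuclideanSpace.single i 1)

/-- The multi-index partial derivative `D^k = ∂^{k₁}_{x₁} ⋯ ∂^{k_d}_{x_d}`. -/
def multiDeriv (k : Fin d → ℕ) (φ : Ed d → ℂ) : Ed d → ℂ :=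
  ((List.ofFn fun i : Fin d => (pderiv1 i)^[k i]).foldr (· ∘ ·) id) φ

/-- The action of `D^k δ_λ` on a test function: `(D^k δ_λ)(φ) = (-1)^{‖k‖} (D^k φ)(λ)`. -/
def diracTerm (k : Fin d → ℕ) (l : Ed d) (φ : 𝓢(Ed d, ℂ)) : ℂ :=
  (-1 : ℂ) ^ (∑ i : Fin d, k i) * multiDeriv k (⇑φ) l

/-- `f = Σ_{λ∈Λ} Σ_k p_k(λ) D^k δ_λ`, with the inner sum finite for each `λ`. -/
def HasRep (f : TempDist d) (Λ : Set (Ed d)) (p : Ed d → (Fin d → ℕ) → ℂ) : Prop :=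
  (∀ l : Ed d, l ∉ Λ → ∀ k, p l k = 0) ∧
  (∀ l : Ed d, {k : Fin d → ℕ | p l k ≠ 0}.Finite) ∧
  (∀ φ : 𝓢(Ed d, ℂ),
    HasSum (fun l : Λ => ∑' k : Fin d → ℕ, p (l : Ed d) k * diracTerm k (l : Ed d) φ) (f φ))

/-- A relatively dense subset of a pseudometric space. -/
def RelDense {X : Type*} [PseudoMetricSpace X] (T : Set X) : Prop :=
  ∃ R : ℝ, 0 < R ∧ ∀ x : X, ∃ τ ∈ T, dist x τ ≤ R

/-- Bohr almost periodic function (with values in `ℂ`): for every `ε > 0` the set of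
`ε`-almost periods is relatively dense. -/
def APFun {V : Type*} [SeminormedAddCommGroup V] (g : V → ℂ) : Prop :=
  Continuous g ∧ ∀ ε : ℝ, 0 < ε →
    RelDense {τ : V | ∀ t : V, ‖g (t + τ) - g t‖ < ε}

/-- Almost periodicity of the purely point measure `μ = Σ_{λ∈Λ} p(λ) δ_λ`:
for every `C^∞` function `φ` with compact support, the function
`t ↦ (μ(y), φ(t−y)) = Σ_{λ∈Λ} p(λ) φ(t−λ)` is almost periodic. -/
def APMeasure (Λ : Set (Ed d)) (p : Ed d → ℂ) : Prop :=
  ∀ φ : Ed d → ℂ, ContDiff ℝ ∞ φ → HasCompactSupport φ →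
    APFun (fun t : Ed d => ∑' l : Λ, p (l : Ed d) * φ (t - (l : Ed d)))

/-- `Λ` is contained in a finite union of translates of (several) full-rank lattices. -/
def SubsetFiniteUnionOfTranslates (Λ : Set (Ed d)) : Prop :=
  ∃ (J : ℕ) (L : Fin J → Set (Ed d)) (v : Fin J → Ed d),
    (∀ j, IsFullRankLattice (L j)) ∧
    Λ ⊆ ⋃ j : Fin J, (fun x => v j + x) '' (L j)

/-- `Λ` is a finite union of translates of (several) full-rank lattices. -/
def EqFiniteUnionOfTranslates (Λ : Set (Ed d)) : Prop :=
  ∃ (J : ℕ) (L : Fin J → Set (Ed d)) (v : Fin J → Ed d),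
    (∀ j, IsFullRankLattice (L j)) ∧
    Λ = ⋃ j : Fin J, (fun x => v j + x) '' (L j)

end Paper

open Paper
open scoped RealInnerProductSpace


/-!
Convolve `μ` with a radial bump `φ` with `φ(0) = 1` supported in a ball of radius `ρ`, where
`2ρ` is below the separation of `Λ`: near each point `a ∈ Λ` the convolution `g = μ * φ` is just
`p(a) φ(· - a)`. Let `τ` be an `ε/2`-almost period of `g` and `a ∈ Λ` the (unique) point within
`ρ` of `λ + τ`, with `s = λ + τ - a` and `c = φ(s) ≥ 0`. Comparing `g` at `λ` and `λ + τ`, and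
at `a - τ = λ - s` and `a`, gives `|c p(a) - p(λ)| < ε/2` and `|p(a) - c p(λ)| < ε/2`; adding them,
`(1 + c) |p(a) - p(λ)| < ε`. If no point of `Λ` is that close to `λ + τ`, then `g(λ + τ) = 0`
and `λ + τ` itself works. For `λ ∉ Λ` the complement of `Λ` is relatively dense.
-/

theorem Metric.IsSeparated.lt_dist {X : Type*} [PseudoMetricSpace X] {s : Set X} {r : ℝ}
    (hs : IsSeparated (.ofReal r) s) {x y : X} (hx : x ∈ s) (hy : y ∈ s) (hxy : x ≠ y) :
    r < dist x y := by
  have : ENNReal.ofReal r < edist x y := hs hx hy hxy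
  rw [edist_dist, ENNReal.ofReal_lt_ofReal_iff'] at this
  exact this.1

theorem Metric.IsSeparated.eq_of_dist_lt {X : Type*} [PseudoMetricSpace X] {s : Set X} {ρ : ℝ}
    (hs : IsSeparated (.ofReal (2 * ρ)) s) {a b t : X} (ha : a ∈ s) (hb : b ∈ s)
    (hta : dist t a < ρ) (htb : dist t b < ρ) : a = b := by
  by_contra hab
  have := hs.lt_dist ha hb hab
  linarith [dist_triangle_left a b t]

namespace Paper

theorem RelDense.mono {X : Type*} [PseudoMetricSpace X] {S T : Set X} (hS : RelDense S)
    (hST : S ⊆ T) : RelDense T := by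
  obtain ⟨R, hR, hS⟩ := hS
  exact ⟨R, hR, fun x => (hS x).imp fun τ ⟨hτ, hxτ⟩ => ⟨hST hτ, hxτ⟩⟩

theorem IsUniformlyDiscrete.exists_isSeparated {d : ℕ} {Λ : Set (Ed d)}
    (hΛ : IsUniformlyDiscrete Λ) : ∃ r : ℝ, 0 < r ∧ IsSeparated (.ofReal r) Λ := by
  obtain ⟨r, hr, hr0, hrη⟩ := ENNReal.lt_iff_exists_real_btwn.1 hΛ.2
  refine ⟨r, ENNReal.ofReal_pos.1 hr0, fun x hx y hy hxy => hrη.trans_le ?_⟩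
  exact iInf_le_of_le ⟨x, hx⟩ (iInf_le_of_le ⟨y, hy⟩ (iInf_le _ hxy))

theorem relDense_compl_of_isSeparated {E : Type*} [NormedAddCommGroup E] [NormedSpace ℝ E]
    {Λ : Set E} {r : ℝ} (hr : 0 < r) (hΛ : IsSeparated (.ofReal r) Λ) (hne : Λᶜ.Nonempty) :
    RelDense Λᶜ := by
  refine ⟨r, hr, fun x => ?_⟩
  by_cases hx : x ∈ Λ
  · rcases subsingleton_or_nontrivial E with hE | hE
    · obtain ⟨y, hy⟩ := hne
      exact absurd (Subsingleton.elim x y ▸ hx) hy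
    obtain ⟨v, hv⟩ := exists_norm_eq E hr.le
    refine ⟨x + v, fun hxv => ?_, by rw [dist_self_add_right, hv]⟩
    have hxv_ne : x ≠ x + v := by
      intro h
      rw [show v = 0 by simpa using h, norm_zero] at hv
      exact hr.ne hv
    have := hΛ.lt_dist hx hxv hxv_ne
    rw [dist_self_add_right, hv] at this
    exact lt_irrefl r this
  · exact ⟨x, hx, by rw [dist_self]; exact hr.le⟩

end Paper

theorem norm_sub_lt_of_norm_smul_sub_lt {F : Type*} [NormedAddCommGroup F] [NormedSpace ℝ F]
    {c ε : ℝ} {z w : F} (hc : 0 ≤ c) (h₁ : ‖c • z - w‖ < ε / 2) (h₂ : ‖z - c • w‖ < ε / 2) :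
    ‖z - w‖ < ε := by
  have hsum : (1 + c) • (z - w) = (c • z - w) + (z - c • w) := by module
  calc ‖z - w‖ ≤ (1 + c) * ‖z - w‖ := le_mul_of_one_le_left (norm_nonneg _) (by linarith)
    _ = ‖(c • z - w) + (z - c • w)‖ := by
      rw [← hsum, norm_smul, Real.norm_of_nonneg (by linarith)]
    _ ≤ ‖c • z - w‖ + ‖z - c • w‖ := norm_add_le _ _
    _ < ε := by linarith

section AtomicConv

variable {E : Type*} [NormedAddCommGroup E] {Λ : Set E} {p φ : E → ℂ} {ρ : ℝ}

/-- `μ * φ` for the atomic measure `μ = Σ_{λ ∈ Λ} p(λ) δ_λ`. -/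
def atomicConv (Λ : Set E) (p φ : E → ℂ) (t : E) : ℂ :=
  ∑' l : Λ, p l * φ (t - l)

theorem apply_sub_eq_zero_of_le_dist (hφ : Function.support φ ⊆ ball 0 ρ) {t a : E}
    (h : ρ ≤ dist t a) : φ (t - a) = 0 := by
  refine Function.notMem_support.1 fun hmem => ?_
  have := hφ hmem
  rw [mem_ball_zero_iff, ← dist_eq_norm] at this
  linarith

theorem atomicConv_eq_of_dist_lt (hsep : IsSeparated (.ofReal (2 * ρ)) Λ)
    (hφ : Function.support φ ⊆ ball 0 ρ) {a t : E} (ha : a ∈ Λ) (ht : dist t a < ρ) :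
    atomicConv Λ p φ t = p a * φ (t - a) := by
  refine tsum_eq_single (⟨a, ha⟩ : Λ) fun ⟨b, hb⟩ hba => ?_
  have hb : ρ ≤ dist t b := by
    by_contra! htb
    exact hba (Subtype.ext (hsep.eq_of_dist_lt hb ha htb ht))
  rw [apply_sub_eq_zero_of_le_dist hφ hb, mul_zero]

theorem atomicConv_eq_zero (hφ : Function.support φ ⊆ ball 0 ρ) {t : E}
    (ht : ∀ a ∈ Λ, ρ ≤ dist t a) : atomicConv Λ p φ t = 0 := by
  calc atomicConv Λ p φ t = ∑' _ : Λ, (0 : ℂ) := tsum_congr fun ⟨a, ha⟩ => by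
        rw [apply_sub_eq_zero_of_le_dist hφ (ht a ha), mul_zero]
    _ = 0 := tsum_zero

end AtomicConv

section Bump

variable {E : Type*} [NormedAddCommGroup E] [NormedSpace ℝ E] [HasContDiffBump E]
  {Λ : Set E} {p : E → ℂ} (f : ContDiffBump (0 : E))

theorem exists_dist_lt_norm_sub_lt_of_almostPeriod
    (hsep : IsSeparated (.ofReal (2 * f.rOut)) Λ) (hsupp : ∀ x, x ∉ Λ → p x = 0)
    {l τ : E} (hl : l ∈ Λ) {ε : ℝ}
    (hτ : ∀ t, ‖atomicConv Λ p (fun x => (f x : ℂ)) (t + τ) -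
      atomicConv Λ p (fun x => (f x : ℂ)) t‖ < ε / 2) :
    ∃ l', dist (l + τ) l' < f.rOut ∧ ‖p l' - p l‖ < ε := by
  have hφ : Function.support (fun x => (f x : ℂ)) ⊆ ball 0 f.rOut := by
    intro x hx
    rw [← f.support_eq]
    simpa using hx
  have hgΛ : ∀ a ∈ Λ, atomicConv Λ p (fun x => (f x : ℂ)) a = p a := fun a ha => by
    rw [atomicConv_eq_of_dist_lt hsep hφ ha (by simpa using f.rOut_pos), sub_self,
      f.one_of_mem_closedBall (mem_closedBall_self f.rIn_pos.le), ofReal_one, mul_one]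
  by_cases hnear : ∃ a ∈ Λ, dist (l + τ) a < f.rOut
  · obtain ⟨a, ha, hτa⟩ := hnear
    refine ⟨a, hτa, norm_sub_lt_of_norm_smul_sub_lt (c := f (l + τ - a)) f.nonneg ?_ ?_⟩
    · have h := hτ l
      rwa [hgΛ l hl, atomicConv_eq_of_dist_lt hsep hφ ha hτa, mul_comm, ← real_smul] at h
    · have hdist : dist (a - τ) l < f.rOut := by
        rwa [dist_eq_norm, show a - τ - l = -(l + τ - a) by abel, norm_neg, ← dist_eq_norm]
      have h := hτ (a - τ)
      rwa [sub_add_cancel, hgΛ a ha, atomicConv_eq_of_dist_lt hsep hφ hl hdist,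
        show a - τ - l = -(l + τ - a) by abel, f.neg, mul_comm, ← real_smul] at h
  · push Not at hnear
    have hout : l + τ ∉ Λ := fun h => by
      linarith [hnear _ h, dist_self (l + τ), f.rOut_pos]
    have h := hτ l
    rw [hgΛ l hl, atomicConv_eq_zero hφ hnear] at h
    refine ⟨l + τ, by simpa using f.rOut_pos, ?_⟩
    rw [hsupp _ hout]
    linarith [norm_nonneg (0 - p l)]

theorem relDense_setOf_norm_sub_lt (hsep : IsSeparated (.ofReal (2 * f.rOut)) Λ)
    (hsupp : ∀ x, x ∉ Λ → p x = 0) (hg : APFun (atomicConv Λ p fun x => (f x : ℂ)))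
    {l : E} (hl : l ∈ Λ) {ε : ℝ} (hε : 0 < ε) : RelDense {l' | ‖p l' - p l‖ < ε} := by
  obtain ⟨R, hR, hperiods⟩ := hg.2 (ε / 2) (half_pos hε)
  refine ⟨R + f.rOut, by linarith [f.rOut_pos], fun x => ?_⟩
  obtain ⟨τ, hτ, hxτ⟩ := hperiods (x - l)
  obtain ⟨l', hl'τ, hl'⟩ := exists_dist_lt_norm_sub_lt_of_almostPeriod f hsep hsupp hl hτ
  refine ⟨l', hl', ?_⟩
  have : dist x (l + τ) = dist (x - l) τ := by rw [dist_eq_norm, dist_eq_norm, sub_sub]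
  linarith [dist_triangle x (l + τ) l']

end Bump

/-- Proposition 2 iv): for an almost periodic measure
`μ = Σ_{λ∈Λ} p(λ) δ_λ` with uniformly discrete support, for all `ε > 0` and `λ ∈ ℝ^d`
there is a relatively dense set `T` with `|μ({λ'}) − μ({λ})| < ε` for all `λ' ∈ T`
(the mass function being `p`, extended by `0` off `Λ`). -/
theorem statement11 (d : ℕ) (Λ : Set (Ed d)) (p : Ed d → ℂ)
    (hΛ : IsUniformlyDiscrete Λ)
    (hsupp : ∀ l : Ed d, l ∉ Λ → p l = 0)
    (hap : APMeasure Λ p) :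
    ∀ (ε : ℝ), 0 < ε → ∀ l : Ed d,
      ∃ T : Set (Ed d), RelDense T ∧ ∀ l' ∈ T, ‖p l' - p l‖ < ε := by
  intro ε hε l
  obtain ⟨r, hr, hsep⟩ := hΛ.exists_isSeparated
  refine ⟨{l' | ‖p l' - p l‖ < ε}, ?_, fun _ h => h⟩
  by_cases hl : l ∈ Λ
  · let f : ContDiffBump (0 : Ed d) := ⟨r / 4, r / 2, by positivity, by linarith⟩
    have hf : 2 * f.rOut = r := by simp only [f]; ring
    refine relDense_setOf_norm_sub_lt f (hf ▸ hsep) hsupp (hap (fun x => (f x : ℂ)) ?_ ?_) hl hε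
    · exact ofRealCLM.contDiff.comp f.contDiff
    · exact f.hasCompactSupport.comp_left ofReal_zero
  · refine (relDense_compl_of_isSeparated hr hsep ⟨l, hl⟩).mono fun l' hl' => ?_
    simp [hsupp l' hl', hsupp l hl, hε]

end
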